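/- arXiv:1503.05816 — 2 statements merged into one kernel-verified Lean document; each statement's English description precedes it below -/
import Mathlib

section
/- For any n×n real matrix A and reals a, b ≥ 0, the matrix exponential integral satisfies ∫₀^{a+b} e^{Ar} dr = ∫₀^a e^{Ar} dr + (∫₀^b e^{Ar} dr)(A ∫₀^a e^{Ar} dr + I). -/
open Matrix

/-- The entrywise integral `∫₀^σ e^{Ar} dr` of the matrix exponential. -/
noncomputable def expIntegral {n : ℕ} (A : Matrix (Fin n) (Fin n) ℝ) (σ : ℝ) :
    Matrix (Fin n) (Fin n) ℝ :=
  Matrix.of fun i j => ∫ r in (0 : ℝ)..σ, NormedSpace.exp (r • A) i j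

/-!
Write `F σ = ∫₀^σ e^{rA} dr`. Differentiating `r ↦ e^{rA}` gives `A F(a) + 1 = e^{aA}`, and
splitting `[0, a + b]` at `a` and substituting `r = s + a` gives `F(a + b) = F(a) + F(b) e^{aA}`.
-/

open NormedSpace MeasureTheory

section NormedAlgebra

-- Mathlib's `exp_continuous` and `exp_add_of_commute` need `NormedAlgebra ℚ 𝔸`, which is not
-- available here; the two lemmas below replace them.
variable {𝔸 : Type*} [NormedRing 𝔸] [NormedAlgebra ℝ 𝔸] [CompleteSpace 𝔸]

theorem continuous_exp_smul (A : 𝔸) : Continuous fun r : ℝ => exp (r • A) :=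
  continuous_iff_continuousAt.2 fun r => (hasDerivAt_exp_smul_const' A r).continuousAt

theorem exp_add_smul (A : 𝔸) (s t : ℝ) : exp ((s + t) • A) = exp (s • A) * exp (t • A) := by
  have hmem (x : 𝔸) : x ∈ Metric.eball (0 : 𝔸) (expSeries ℝ 𝔸).radius :=
    (expSeries_radius_eq_top ℝ 𝔸).symm ▸ edist_lt_top _ _
  rw [add_smul]
  exact exp_add_of_commute_of_mem_ball (((Commute.refl A).smul_left s).smul_right t)
    (hmem _) (hmem _)

theorem mul_integral_exp_smul_add_one (A : 𝔸) (σ : ℝ) :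
    A * (∫ r in (0 : ℝ)..σ, exp (r • A)) + 1 = exp (σ • A) := by
  have hFTC : ∫ r in (0 : ℝ)..σ, A * exp (r • A) = exp (σ • A) - exp ((0 : ℝ) • A) :=
    intervalIntegral.integral_eq_sub_of_hasDerivAt
      (fun r _ => hasDerivAt_exp_smul_const' A r)
      ((continuous_const.mul (continuous_exp_smul A)).intervalIntegrable 0 σ)
  have hmul := (ContinuousLinearMap.mul ℝ 𝔸 A).intervalIntegral_comp_comm
    ((continuous_exp_smul A).intervalIntegrable (μ := volume) 0 σ)
  simp only [ContinuousLinearMap.mul_apply'] at hmul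
  rw [← hmul, hFTC, zero_smul, exp_zero, sub_add_cancel]

theorem integral_exp_smul_add (A : 𝔸) (a b : ℝ) :
    ∫ r in (0 : ℝ)..a + b, exp (r • A) =
      (∫ r in (0 : ℝ)..a, exp (r • A)) + (∫ r in (0 : ℝ)..b, exp (r • A)) * exp (a • A) := by
  have hint (u v : ℝ) := (continuous_exp_smul A).intervalIntegrable (μ := volume) u v
  have hmul := ((ContinuousLinearMap.mul ℝ 𝔸).flip (exp (a • A))).intervalIntegral_comp_comm
    (hint 0 b)
  simp only [ContinuousLinearMap.flip_apply, ContinuousLinearMap.mul_apply'] at hmul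
  rw [← intervalIntegral.integral_add_adjacent_intervals (hint 0 a) (hint a (a + b)), ← hmul]
  congr 1
  calc ∫ r in a..a + b, exp (r • A) = ∫ s in (0 : ℝ)..b, exp ((s + a) • A) := by
        rw [intervalIntegral.integral_comp_add_right (fun r => exp (r • A)), zero_add, add_comm b]
    _ = ∫ s in (0 : ℝ)..b, exp (s • A) * exp (a • A) := by simp_rw [exp_add_smul]

end NormedAlgebra

section Matrix
open scoped Matrix.Norms.Operator

theorem expIntegral_eq_intervalIntegral {n : ℕ} (A : Matrix (Fin n) (Fin n) ℝ) (σ : ℝ) :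
    expIntegral A σ = ∫ r in (0 : ℝ)..σ, exp (r • A) := by
  ext i j
  exact (entryLinearMap ℝ ℝ i j).toContinuousLinearMap.intervalIntegral_comp_comm
    ((continuous_exp_smul A).intervalIntegrable 0 σ)

theorem expIntegral_add_eq_add_mul_exp {n : ℕ} (A : Matrix (Fin n) (Fin n) ℝ) (a b : ℝ) :
    expIntegral A (a + b) = expIntegral A a + expIntegral A b * exp (a • A) := by
  simp only [expIntegral_eq_intervalIntegral]
  -- `exact` rather than `rw`: the operations on the two sides agree only up to unfolding the
  -- operator-norm instances.
  exact integral_exp_smul_add A a b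

theorem mul_expIntegral_add_one_eq_exp {n : ℕ} (A : Matrix (Fin n) (Fin n) ℝ) (a : ℝ) :
    A * expIntegral A a + 1 = exp (a • A) := by
  rw [expIntegral_eq_intervalIntegral]
  exact mul_integral_exp_smul_add_one A a

end Matrix

theorem expIntegral_add_general {n : ℕ} (A : Matrix (Fin n) (Fin n) ℝ)
    (a b : ℝ) :
    expIntegral A (a + b) =
      expIntegral A a + expIntegral A b * (A * expIntegral A a + 1) := by
  rw [mul_expIntegral_add_one_eq_exp, expIntegral_add_eq_add_mul_exp]

/-- The semigroup-type identity for the matrix exponential integral: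
`∫₀^{a+b} e^{Ar} dr = ∫₀^a e^{Ar} dr + (∫₀^b e^{Ar} dr)(A ∫₀^a e^{Ar} dr + I)`. -/
theorem expIntegral_add {n : ℕ} (A : Matrix (Fin n) (Fin n) ℝ)
    (a b : ℝ) (ha : 0 ≤ a) (hb : 0 ≤ b) :
    expIntegral A (a + b) =
      expIntegral A a + expIntegral A b * (A * expIntegral A a + 1) :=
  expIntegral_add_general A a b
end

section
/- Polytopic embedding of matrix polynomials (scalar quadratic-form version): let L₀, …, L_N be symmetric n×n real matrices, χ > 0, and define Φ̲_i := Σ_{k=0}^{i} L_k χ^k for i = 0, …, N. Fix x ∈ ℝⁿ. If xᵀΦ̲_i x ≤ 0 for all i ∈ {0, …, N}, then xᵀ(Σ_{k=0}^{N} L_k σ^k) x ≤ 0 for every σ ∈ [0, χ]. -/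
/-!
Both quadratic forms are polynomials in the scalars `qₖ = xᵀ Lₖ x`. Writing
`σᵏ qₖ = (σ/χ)ᵏ (χᵏ qₖ)`, the weights `(σ/χ)ᵏ` are nonnegative and nonincreasing in `k`,
so Abel summation expresses the sum as a nonnegative combination of the partial sums
`Σ_{k ≤ i} χᵏ qₖ = xᵀ Φ̲ᵢ x`, which are all nonpositive.
-/

open Matrix Finset

theorem sum_mul_nonpos_of_antitone_of_partialSums_nonpos {R : Type*} [CommRing R]
    [LinearOrder R] [IsStrictOrderedRing R] {w b : ℕ → R} {N : ℕ}
    (hw : Antitone w) (hwN : 0 ≤ w N) (hb : ∀ i ≤ N, ∑ k ∈ range (i + 1), b k ≤ 0) :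
    ∑ k ∈ range (N + 1), w k * b k ≤ 0 := by
  have hparts := sum_range_by_parts w b (N + 1)
  simp only [smul_eq_mul, Nat.add_sub_cancel] at hparts
  rw [hparts, sub_nonpos]
  calc w N * ∑ k ∈ range (N + 1), b k
      ≤ 0 := mul_nonpos_of_nonneg_of_nonpos hwN (hb N le_rfl)
    _ ≤ ∑ i ∈ range N, (w (i + 1) - w i) * ∑ k ∈ range (i + 1), b k := by
      refine sum_nonneg fun i hi => mul_nonneg_of_nonpos_of_nonpos ?_ ?_
      · exact sub_nonpos.2 (hw i.le_succ)
      · exact hb i (mem_range.1 hi).le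

theorem dotProduct_sum_smul_mulVec {ι m n R : Type*} [Fintype m] [Fintype n] [CommSemiring R]
    (s : Finset ι) (c : ι → R) (A : ι → Matrix m n R) (x : m → R) (y : n → R) :
    x ⬝ᵥ (∑ i ∈ s, c i • A i) *ᵥ y = ∑ i ∈ s, c i * (x ⬝ᵥ A i *ᵥ y) := by
  simp only [sum_mulVec, dotProduct_sum, smul_mulVec, dotProduct_smul, smul_eq_mul]

theorem polytopic_embedding_lower_general {n N : ℕ}
    (L : ℕ → Matrix (Fin n) (Fin n) ℝ)
    (χ : ℝ) (hχ : 0 < χ) (x : Fin n → ℝ)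
    (hvert : ∀ i ≤ N, x ⬝ᵥ (∑ k ∈ range (i + 1), χ ^ k • L k).mulVec x ≤ 0) :
    ∀ σ ∈ Set.Icc (0 : ℝ) χ,
      x ⬝ᵥ (∑ k ∈ range (N + 1), σ ^ k • L k).mulVec x ≤ 0 := by
  rintro σ ⟨hσ0, hσχ⟩
  simp only [dotProduct_sum_smul_mulVec] at hvert ⊢
  have hrescale (k : ℕ) (q : ℝ) : σ ^ k * q = (σ / χ) ^ k * (χ ^ k * q) := by
    rw [div_pow, ← mul_assoc, div_mul_cancel₀ _ (pow_ne_zero k hχ.ne')]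
  rw [sum_congr rfl fun k _ => hrescale k _]
  have hratio : 0 ≤ σ / χ := div_nonneg hσ0 hχ.le
  exact sum_mul_nonpos_of_antitone_of_partialSums_nonpos
    (pow_right_anti₀ hratio ((div_le_one hχ).2 hσχ)) (pow_nonneg hratio N) hvert

/-- Polytopic embedding of matrix polynomials (lower-bound, quadratic-form version):
if the quadratic form of each partial-sum vertex `Φ̲_i = Σ_{k=0}^{i} L_k χ^k` at `x`
is nonpositive, then `xᵀ(Σ_{k=0}^{N} L_k σ^k)x ≤ 0` for every `σ ∈ [0, χ]`. -/
theorem polytopic_embedding_lower {n N : ℕ}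
    (L : ℕ → Matrix (Fin n) (Fin n) ℝ) (hL : ∀ k, (L k).IsSymm)
    (χ : ℝ) (hχ : 0 < χ) (x : Fin n → ℝ)
    (hvert : ∀ i ≤ N, x ⬝ᵥ (∑ k ∈ range (i + 1), χ ^ k • L k).mulVec x ≤ 0) :
    ∀ σ ∈ Set.Icc (0 : ℝ) χ,
      x ⬝ᵥ (∑ k ∈ range (N + 1), σ ^ k • L k).mulVec x ≤ 0 :=
  polytopic_embedding_lower_general L χ hχ x hvert
end
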